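/- arXiv:1605.05277 — 6 statements merged into one kernel-verified Lean document; each statement's English description precedes it below -/
import Mathlib

section
/- Let b_0,…,b_p be positive integers and let σ = {w ∈ ℝ_{≥0}^{p+1} : ∑_{i=0}^p b_i w_i = 1}, viewed as a polytope with tangent lattice T_{σ,ℤ} = {w ∈ ℤ^{p+1} : ∑_i b_i w_i = 0}. Then the greatest integer b such that the constant function b^{-1} is integral affine on σ equals gcd(b_0,…,b_p), and the volume of σ with respect to the Lebesgue measure normalized by T_{σ,ℤ} equals gcd(b_i)/(p! ∏_i b_i). -/
/-! Write `g = gcd b_i`. The vertices of σ are the points `e_i / b_i`, so an integral affine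
function equal to `1/k` on σ forces `k ∣ b_i` for every `i`; conversely `w ↦ ∑ (b_i / g) w_i`
equals `1/g` on σ.

For the volume, forgetting `w_0` and scaling `w_i ↦ b_i w_i` maps σ onto the corner simplex
`{y ≥ 0, ∑ y_i ≤ 1}` of volume `1/p!`, so everything reduces to `|det N|`, where the columns of
`N` are the coordinates `1, …, p` of a basis of `T_{σ,ℤ}`. Completing that basis by a vector `u`
with `∑ b_i u_i = g` gives a unimodular matrix `A` with `bᵀ A = g e_0ᵀ`; multiplying by the
adjugate of `A` yields `±b_0 = g det N`. -/

open MeasureTheory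

/-- The linear form w ↦ ∑ b_i w_i on ℤ^{p+1}. -/
noncomputable def sumCoeff (p : ℕ) (b : Fin (p + 1) → ℕ) : (Fin (p + 1) → ℤ) →ₗ[ℤ] ℤ :=
  ∑ i, (b i : ℤ) • LinearMap.proj i

def cornerSimplex (n : ℕ) (t : ℝ) : Set (Fin n → ℝ) :=
  {y | (∀ i, 0 ≤ y i) ∧ ∑ i, y i ≤ t}

theorem cornerSimplex_eq_empty {n : ℕ} {t : ℝ} (ht : t < 0) : cornerSimplex n t = ∅ :=
  Set.eq_empty_of_forall_notMem fun _ ⟨hy, hsum⟩ =>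
    (Finset.sum_nonneg fun i _ => hy i).not_gt (hsum.trans_lt ht)

theorem cornerSimplex_succ (n : ℕ) (t : ℝ) :
    cornerSimplex (n + 1) t = MeasurableEquiv.piFinSuccAbove (fun _ => ℝ) 0 ⁻¹'
      {q | 0 ≤ q.1 ∧ q.2 ∈ cornerSimplex n (t - q.1)} := by
  ext y
  simp [cornerSimplex, MeasurableEquiv.piFinSuccAbove, Fin.forall_fin_succ, Fin.sum_univ_succ,
    le_sub_iff_add_le', and_assoc, Fin.tail]

theorem integral_sub_pow_div_factorial (n : ℕ) (t : ℝ) :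
    ∫ a in (0 : ℝ)..t, (t - a) ^ n / n.factorial = t ^ (n + 1) / (n + 1).factorial := by
  rw [intervalIntegral.integral_div, intervalIntegral.integral_comp_sub_left (· ^ n),
    sub_self, sub_zero, integral_pow, Nat.factorial_succ]
  push_cast
  field_simp
  ring

theorem volume_cornerSimplex (n : ℕ) {t : ℝ} (ht : 0 ≤ t) :
    volume (cornerSimplex n t) = ENNReal.ofReal (t ^ n / n.factorial) := by
  induction n generalizing t with
  | zero =>
    have : cornerSimplex 0 t = Set.univ := by ext; simp [cornerSimplex, ht]
    simp [this, volume_pi]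
  | succ n ih =>
    have hslice (a : ℝ) : volume ({q : ℝ × (Fin n → ℝ) |
        0 ≤ q.1 ∧ q.2 ∈ cornerSimplex n (t - q.1)}.preimage (Prod.mk a)) =
        (Set.Icc 0 t).indicator (fun a => ENNReal.ofReal ((t - a) ^ n / n.factorial)) a := by
      by_cases ha : a ∈ Set.Icc 0 t
      · simp [ha.1, Set.indicator_of_mem ha, ih (sub_nonneg.2 ha.2)]
      · rcases not_and_or.1 ha with ha | ha
        · simp [ha]
        · simp [cornerSimplex_eq_empty (sub_neg.2 (not_le.1 ha)), Set.indicator_of_notMem, *]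
    have hmeas : MeasurableSet
        {q : ℝ × (Fin n → ℝ) | 0 ≤ q.1 ∧ q.2 ∈ cornerSimplex n (t - q.1)} := by
      simp only [cornerSimplex]
      measurability
    rw [cornerSimplex_succ, (volume_preserving_piFinSuccAbove (fun _ => ℝ) 0).measure_preimage
      hmeas.nullMeasurableSet, Measure.volume_eq_prod, Measure.prod_apply hmeas]
    simp_rw [hslice]
    rw [lintegral_indicator measurableSet_Icc, ← ofReal_integral_eq_lintegral_ofReal,
      integral_Icc_eq_integral_Ioc, ← intervalIntegral.integral_of_le ht,
      integral_sub_pow_div_factorial]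
    · exact (((continuous_const.sub continuous_id).pow n).div_const _).integrableOn_Icc
    · refine (ae_restrict_iff' measurableSet_Icc).2 (ae_of_all _ fun a ha => ?_)
      have := sub_nonneg.2 ha.2
      positivity

open Matrix in
theorem Matrix.volume_preimage_mulVec_add {ι : Type*} [Fintype ι] [DecidableEq ι]
    {M : Matrix ι ι ℝ} (hM : M.det ≠ 0) (c : ι → ℝ) (s : Set (ι → ℝ)) :
    volume ((fun x => M *ᵥ x + c) ⁻¹' s) = ENNReal.ofReal |M.det⁻¹| * volume s := by
  change volume (toLin' M ⁻¹' ((· + c) ⁻¹' s)) = _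
  rw [Measure.addHaar_preimage_linearMap _ (by rwa [LinearMap.det_toLin']),
    measure_preimage_add_right, LinearMap.det_toLin']

theorem nonneg_iff_mem_cornerSimplex {p : ℕ} {b w : Fin (p + 1) → ℝ} (hb : ∀ i, 0 < b i)
    (hw : ∑ i, b i * w i = 1) :
    (∀ i, 0 ≤ w i) ↔ (fun i : Fin p => b i.succ * w i.succ) ∈ cornerSimplex p 1 := by
  rw [Fin.sum_univ_succ] at hw
  constructor
  · intro h
    exact ⟨fun i => mul_nonneg (hb _).le (h _), by linarith [mul_nonneg (hb 0).le (h 0)]⟩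
  · rintro ⟨h, hsum⟩ i
    refine Fin.cases ?_ (fun i => ?_) i
    · exact (mul_nonneg_iff_of_pos_left (hb 0)).1 (by linarith)
    · exact (mul_nonneg_iff_of_pos_left (hb _)).1 (h i)

open Matrix in
theorem volume_affine_preimage_simplex {p : ℕ} {b : Fin (p + 1) → ℝ} (hb : ∀ i, 0 < b i)
    {w0 : Fin (p + 1) → ℝ} (hw0 : ∑ i, b i * w0 i = 1) {V : Fin p → Fin (p + 1) → ℝ}
    (hV : ∀ j, ∑ i, b i * V j i = 0) (hdet : (of fun i j => V j i.succ).det ≠ 0) :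
    volume ((fun x : Fin p → ℝ => fun i => w0 i + ∑ j, x j * V j i) ⁻¹'
        {w | (∀ i, 0 ≤ w i) ∧ ∑ i, b i * w i = 1}) =
      ENNReal.ofReal ((p.factorial * (∏ i : Fin p, b i.succ) *
        |(of fun i j => V j i.succ).det|)⁻¹) := by
  set N : Matrix (Fin p) (Fin p) ℝ := of fun i j => V j i.succ
  set M : Matrix (Fin p) (Fin p) ℝ := diagonal (fun i : Fin p => b i.succ) * N with hM
  have hW (x : Fin p → ℝ) : ∑ i, b i * (w0 i + ∑ j, x j * V j i) = 1 := by
    simp only [mul_add, Finset.sum_add_distrib, Finset.mul_sum, hw0]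
    rw [Finset.sum_comm]
    simp [mul_left_comm (b _), ← Finset.mul_sum, hV]
  have hpre : (fun x : Fin p → ℝ => fun i => w0 i + ∑ j, x j * V j i) ⁻¹'
      {w | (∀ i, 0 ≤ w i) ∧ ∑ i, b i * w i = 1} =
      (fun x => M *ᵥ x + fun i : Fin p => b i.succ * w0 i.succ) ⁻¹'
        cornerSimplex p 1 := by
    ext x
    simp only [Set.mem_preimage, Set.mem_ofPred_eq, hW x, and_true,
      nonneg_iff_mem_cornerSimplex hb (hW x)]
    congr! with i
    simp only [hM, N, mulVec, dotProduct, diagonal_mul, of_apply, Pi.add_apply]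
    rw [mul_add, Finset.mul_sum, add_comm]
    exact congrArg₂ _ (Finset.sum_congr rfl fun j _ => by ring) rfl
  have hb' : ∏ i : Fin p, b i.succ ≠ 0 := Finset.prod_ne_zero_iff.2 fun i _ => (hb _).ne'
  rw [hpre, volume_preimage_mulVec_add (by simp [hM, hb', hdet]),
    volume_cornerSimplex p zero_le_one, ← ENNReal.ofReal_mul (abs_nonneg _), det_mul, det_diagonal, one_pow, abs_inv, abs_mul,
    abs_of_pos (Finset.prod_pos fun i _ => hb _)]
  congr 1
  field_simp

open Matrix in
theorem Matrix.det_mul_eq_mul_det_submatrix_of_vecMul_eq_single {R : Type*} [CommRing R] {n : ℕ}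
    {A : Matrix (Fin (n + 1)) (Fin (n + 1)) R} {b : Fin (n + 1) → R} {g : R}
    (h : b ᵥ* A = Pi.single 0 g) :
    A.det * b 0 = g * (A.submatrix Fin.succ Fin.succ).det := by
  have := congrFun (congrArg (· ᵥ* A.adjugate) h) 0
  simpa [vecMul_vecMul, mul_adjugate, single_vecMul, vecMul_smul, vecMul_one,
    adjugate_fin_succ_eq_det_submatrix, mul_comm] using this

theorem Nat.cast_finset_gcd {ι : Type*} (s : Finset ι) (b : ι → ℕ) :
    ((s.gcd b : ℕ) : ℤ) = s.gcd fun i => (b i : ℤ) := by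
  refine Int.dvd_antisymm (Int.natCast_nonneg _) Finset.Int.finsetGcd_nonneg
    (Finset.dvd_gcd fun i hi => Int.natCast_dvd_natCast.2 (Finset.gcd_dvd hi)) ?_
  rw [← Int.natAbs_of_nonneg (Finset.Int.finsetGcd_nonneg (s := s)), Int.natCast_dvd_natCast]
  exact Finset.dvd_gcd fun i hi => Int.natAbs_dvd_natAbs.2 (Finset.gcd_dvd hi)

theorem Nat.dvd_of_intCast_div_add_intCast_eq_inv {k n : ℕ} (hk : k ≠ 0) (hn : n ≠ 0) {a c : ℤ}
    (h : (a : ℝ) / n + c = (k : ℝ)⁻¹) : k ∣ n := by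
  have h' : ((k * (a + c * n) : ℤ) : ℝ) = (n : ℤ) := by
    push_cast
    field_simp at h
    linarith
  exact Int.natCast_dvd_natCast.1 ⟨_, (Int.cast_injective h').symm⟩

section

variable {p : ℕ} {b : Fin (p + 1) → ℕ}

theorem sumCoeff_apply (w : Fin (p + 1) → ℤ) : sumCoeff p b w = ∑ i, (b i : ℤ) * w i := by
  simp [sumCoeff]

theorem exists_sumCoeff_eq_gcd : ∃ u, sumCoeff p b u = Finset.univ.gcd b := by
  obtain ⟨u, hu⟩ := Finset.gcd_eq_sum_mul Finset.univ fun i => (b i : ℤ)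
  exact ⟨u, by rw [sumCoeff_apply, Nat.cast_finset_gcd, hu]⟩

theorem gcd_dvd_sumCoeff (w : Fin (p + 1) → ℤ) :
    ((Finset.univ.gcd b : ℕ) : ℤ) ∣ sumCoeff p b w := by
  rw [sumCoeff_apply]
  exact Finset.dvd_sum fun i hi =>
    (Int.natCast_dvd_natCast.2 (Finset.gcd_dvd hi)).mul_right _

theorem gcd_mul_abs_det_eq (hg : Finset.univ.gcd b ≠ 0)
    (v : Module.Basis (Fin p) ℤ (LinearMap.ker (sumCoeff p b))) :
    ((Finset.univ.gcd b : ℕ) : ℤ) *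
      |(Matrix.of fun i j : Fin p => (v j : Fin (p + 1) → ℤ) i.succ).det| = b 0 := by
  set g : ℤ := ((Finset.univ.gcd b : ℕ) : ℤ)
  have hg : g ≠ 0 := Int.natCast_ne_zero.2 hg
  obtain ⟨u, hu⟩ := exists_sumCoeff_eq_gcd (b := b)
  let B := Module.Basis.mkFinCons u v
    (fun c x hx hcx => by
      have := congrArg (sumCoeff p b) hcx
      rw [map_add, map_smul, hu, LinearMap.mem_ker.1 hx, smul_eq_mul, add_zero, map_zero] at this
      exact (mul_eq_zero.1 this).resolve_right hg)
    (fun z => ⟨-(sumCoeff p b z / g), by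
      rw [LinearMap.mem_ker, map_add, map_smul, hu, smul_eq_mul, neg_mul,
        Int.ediv_mul_cancel (gcd_dvd_sumCoeff z), add_neg_cancel]⟩)
  let A := (Pi.basisFun ℤ (Fin (p + 1))).toMatrix B
  have hA : |A.det| = 1 := by
    rw [← Int.isUnit_iff_abs_eq, ← Module.Basis.det_apply]
    exact Module.Basis.isUnit_det _ _
  have hvec : Matrix.vecMul (fun i => (b i : ℤ)) A = Pi.single 0 g := by
    ext k
    refine Fin.cases ?_ (fun j => ?_) k
    · simp [A, B, Matrix.vecMul, dotProduct, Module.Basis.toMatrix_apply, ← sumCoeff_apply, hu, g]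
    · simp [A, B, Matrix.vecMul, dotProduct, Module.Basis.toMatrix_apply, ← sumCoeff_apply]
  have hsub :
      A.submatrix Fin.succ Fin.succ = Matrix.of fun i j => (v j : Fin (p + 1) → ℤ) i.succ := by
    ext i j
    simp [A, B, Module.Basis.toMatrix_apply]
  have := congrArg abs (Matrix.det_mul_eq_mul_det_submatrix_of_vecMul_eq_single hvec)
  rwa [abs_mul, abs_mul, hA, one_mul, hsub, abs_of_nonneg (Int.natCast_nonneg _),
    abs_of_nonneg (Int.natCast_nonneg _), eq_comm] at this

theorem sum_mul_coe_ker_sumCoeff (v : LinearMap.ker (sumCoeff p b)) :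
    ∑ i, (b i : ℝ) * ((v : Fin (p + 1) → ℤ) i : ℝ) = 0 := by
  exact_mod_cast (sumCoeff_apply (v : Fin (p + 1) → ℤ)).symm.trans (LinearMap.mem_ker.1 v.2)

theorem exists_intAffine_eq_inv_gcd (hg : Finset.univ.gcd b ≠ 0) :
    ∃ (a : Fin (p + 1) → ℤ) (c : ℤ), ∀ w : Fin (p + 1) → ℝ, ∑ i, (b i : ℝ) * w i = 1 →
      ∑ i, (a i : ℝ) * w i + c = ((Finset.univ.gcd b : ℕ) : ℝ)⁻¹ := by
  refine ⟨fun i => (b i / Finset.univ.gcd b : ℕ), 0, fun w hw => ?_⟩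
  have hcast (i) : ((b i / Finset.univ.gcd b : ℕ) : ℝ) = b i / Finset.univ.gcd b :=
    Nat.cast_div (Finset.gcd_dvd (Finset.mem_univ i)) (Nat.cast_ne_zero.2 hg)
  simp only [Int.cast_natCast, hcast, Int.cast_zero, add_zero, div_mul_eq_mul_div,
    ← Finset.sum_div, hw, one_div]

theorem dvd_of_intAffine_eq_inv_on_simplex (hb : ∀ i, 0 < b i) {k : ℕ} (hk : 0 < k)
    {a : Fin (p + 1) → ℤ} {c : ℤ}
    (h : ∀ w : Fin (p + 1) → ℝ, (∀ i, 0 ≤ w i) → ∑ i, (b i : ℝ) * w i = 1 →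
      ∑ i, (a i : ℝ) * w i + c = (k : ℝ)⁻¹) (i : Fin (p + 1)) : k ∣ b i := by
  have hbi : (b i : ℝ) ≠ 0 := Nat.cast_ne_zero.2 (hb i).ne'
  have := h (Pi.single i (b i : ℝ)⁻¹) (fun j => by simp [Pi.single_apply]; split <;> positivity)
    (by simp [Pi.single_apply, hbi])
  simp only [Pi.single_apply, mul_ite, mul_zero, Finset.sum_ite_eq', Finset.mem_univ,
    if_true] at this
  exact Nat.dvd_of_intCast_div_add_intCast_eq_inv hk.ne' (hb i).ne' (by rwa [div_eq_mul_inv])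

end

theorem stmt0 (p : ℕ) (b : Fin (p + 1) → ℕ) (hb : ∀ i, 0 < b i) :
    IsGreatest {k : ℕ | 0 < k ∧ ∃ (a : Fin (p + 1) → ℤ) (c : ℤ),
        ∀ w : Fin (p + 1) → ℝ, (∀ i, 0 ≤ w i) → (∑ i, (b i : ℝ) * w i = 1) →
          ∑ i, (a i : ℝ) * w i + (c : ℝ) = (k : ℝ)⁻¹}
      (Finset.univ.gcd b) ∧
    ∀ (v : Module.Basis (Fin p) ℤ (LinearMap.ker (sumCoeff p b))) (w0 : Fin (p + 1) → ℝ),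
      (∑ i, (b i : ℝ) * w0 i = 1) →
      volume ((fun x : Fin p → ℝ => fun i => w0 i + ∑ j, x j * ((v j : Fin (p + 1) → ℤ) i : ℝ))
          ⁻¹' {w : Fin (p + 1) → ℝ | (∀ i, 0 ≤ w i) ∧ ∑ i, (b i : ℝ) * w i = 1})
        = ENNReal.ofReal (((Finset.univ.gcd b : ℕ) : ℝ) / (p.factorial * ∏ i, (b i : ℝ))) := by
  have hg : 0 < Finset.univ.gcd b :=
    Nat.pos_of_dvd_of_pos (Finset.gcd_dvd (Finset.mem_univ 0)) (hb 0)
  refine ⟨⟨⟨hg, ?_⟩, ?_⟩, fun v w0 hw0 => ?_⟩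
  · obtain ⟨a, c, h⟩ := exists_intAffine_eq_inv_gcd hg.ne'
    exact ⟨a, c, fun w _ hw => h w hw⟩
  · rintro k ⟨hk, a, c, h⟩
    exact Nat.le_of_dvd hg (Finset.dvd_gcd fun i _ => dvd_of_intAffine_eq_inv_on_simplex hb hk h i)
  set N : Matrix (Fin p) (Fin p) ℤ := Matrix.of fun i j => (v j : Fin (p + 1) → ℤ) i.succ
  have hN : ((Finset.univ.gcd b : ℕ) : ℝ) * |(N.det : ℝ)| = b 0 := by
    exact_mod_cast gcd_mul_abs_det_eq hg.ne' v
  have hdet : (Matrix.of fun i j : Fin p => ((v j : Fin (p + 1) → ℤ) i.succ : ℝ)).det = N.det :=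
    ((Int.castRingHom ℝ).map_det N).symm
  have hN0 : (N.det : ℝ) ≠ 0 := by
    rintro h0
    rw [h0, abs_zero, mul_zero] at hN
    exact (hb 0).ne' (by exact_mod_cast hN.symm)
  rw [volume_affine_preimage_simplex (b := fun i => (b i : ℝ)) (fun i => by exact_mod_cast hb i)
    hw0 (fun j => sum_mul_coe_ker_sumCoeff (v j)) (hdet ▸ hN0), hdet, Fin.prod_univ_succ, ← hN]
  congr 1
  field_simp
end

section
/- Let b_0,…,b_p be positive integers, let σ' = {w' ∈ ℝ_{≥0}^{p+1} : ∑_i w'_i = 1} be the standard simplex with lattice T_{σ',ℤ} = {w ∈ ℤ^{p+1} : ∑_i w_i = 0}, and let φ: ℝ^{p+1} → ℝ^{p+1} be the linear isomorphism φ(w)_j = b_j w_j. Let T_{σ,ℤ} = {w ∈ ℤ^{p+1} : ∑_i b_i w_i = 0}. Then the index [T_{σ',ℤ} : φ(T_{σ,ℤ})] equals (∏_i b_i)/gcd(b_0,…,b_p). -/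
/-!
Write `φ` for coordinatewise multiplication by `b` and `S` for the coordinate sum, so that
`T_{σ',ℤ} = ker S` and `T_{σ,ℤ} = ker (S ∘ φ)`. Then `φ(ker (S ∘ φ)) = im φ ∩ ker S`, and by the
second isomorphism theorem its index in `ker S` is `[ker S + im φ : im φ]`. Since `S` is
surjective, `ker S + im φ = S⁻¹(im (S ∘ φ))` has index `[ℤ : im (S ∘ φ)]`, and
`im (S ∘ φ) = gcd(b) ℤ` by Bézout; dividing `[ℤ^{p+1} : im φ] = ∏ b_i` by `gcd(b)` gives the claim.
-/

/-- φ(w)_j = b_j w_j. -/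
noncomputable def mulMap (p : ℕ) (b : Fin (p + 1) → ℕ) :
    (Fin (p + 1) → ℤ) →ₗ[ℤ] (Fin (p + 1) → ℤ) :=
  LinearMap.pi fun j => (b j : ℤ) • LinearMap.proj j

open Finset

theorem AddMonoidHom.relIndex_map_ker_comp_mul_index {G H K : Type*} [AddCommGroup G]
    [AddCommGroup H] [AddCommGroup K] (f : G →+ H) (g : H →+ K) (hg : Function.Surjective g) :
    ((g.comp f).ker.map f).relIndex g.ker * (g.comp f).range.index = f.range.index := by
  have hsup : f.range ⊔ g.ker = (g.comp f).range.comap g := by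
    rw [AddMonoidHom.range_comp, AddSubgroup.comap_map_eq]
  rw [← AddMonoidHom.comap_ker, AddSubgroup.map_comap_eq, AddSubgroup.inf_relIndex_right,
    ← AddSubgroup.relIndex_sup_left, hsup, ← AddSubgroup.index_comap_of_surjective _ hg]
  exact AddSubgroup.relIndex_mul_index (hsup ▸ le_sup_left)

theorem LinearMap.relIndex_map_ker_comp_mul_index {R M N P : Type*} [Ring R] [AddCommGroup M]
    [AddCommGroup N] [AddCommGroup P] [Module R M] [Module R N] [Module R P] (f : M →ₗ[R] N)
    (g : N →ₗ[R] P) (hg : Function.Surjective g) :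
    ((ker (g ∘ₗ f)).map f).toAddSubgroup.relIndex (ker g).toAddSubgroup *
      (range (g ∘ₗ f)).toAddSubgroup.index = (range f).toAddSubgroup.index :=
  AddMonoidHom.relIndex_map_ker_comp_mul_index f.toAddMonoidHom g.toAddMonoidHom hg

lemma Finset.natCast_gcd {α : Type*} (s : Finset α) (f : α → ℕ) :
    ((s.gcd f : ℕ) : ℤ) = s.gcd fun i => (f i : ℤ) := by
  classical
  induction s using Finset.induction with
  | empty => simp
  | insert a s ha ih =>
    rw [gcd_insert, gcd_insert, ← ih, ← Int.coe_gcd, Int.gcd_natCast_natCast]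
    rfl

lemma range_mulLeft_toAddSubgroup {ι : Type*} (b : ι → ℤ) :
    (LinearMap.range (LinearMap.mulLeft ℤ b)).toAddSubgroup =
      AddSubgroup.pi Set.univ fun i => AddSubgroup.zmultiples (b i) := by
  ext v
  simp only [Submodule.mem_toAddSubgroup, LinearMap.mem_range, LinearMap.mulLeft_apply,
    AddSubgroup.mem_pi, Set.mem_univ, true_implies, Int.mem_zmultiples_iff]
  constructor
  · rintro ⟨w, rfl⟩ i
    exact dvd_mul_right _ _
  · intro h
    choose w hw using h
    exact ⟨w, funext fun i => (hw i).symm⟩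

variable {ι : Type*} [Fintype ι]

variable (ι) in
def sumForm : (ι → ℤ) →ₗ[ℤ] ℤ := ∑ i, LinearMap.proj i

@[simp] lemma sumForm_apply (v : ι → ℤ) : sumForm ι v = ∑ i, v i := by
  simp [sumForm, LinearMap.sum_apply]

lemma sumForm_comp_mulLeft (b : ι → ℤ) :
    sumForm ι ∘ₗ LinearMap.mulLeft ℤ b = ∑ i, b i • LinearMap.proj i := by
  ext v
  simp [LinearMap.sum_apply]

lemma sumForm_surjective [Nonempty ι] : Function.Surjective (sumForm ι) := by
  classical
  obtain ⟨i⟩ := ‹Nonempty ι›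
  exact fun t => ⟨Pi.single i t, by simp⟩

lemma index_range_mulLeft (b : ι → ℤ) :
    (LinearMap.range (LinearMap.mulLeft ℤ b)).toAddSubgroup.index = ∏ i, (b i).natAbs := by
  rw [range_mulLeft_toAddSubgroup, AddSubgroup.index_pi]
  exact Finset.prod_congr rfl fun i _ => Int.index_zmultiples (b i)

lemma range_sumForm_comp_mulLeft (b : ι → ℤ) :
    LinearMap.range (sumForm ι ∘ₗ LinearMap.mulLeft ℤ b) = Ideal.span {univ.gcd b} := by
  apply le_antisymm
  · rintro _ ⟨v, rfl⟩
    simp only [LinearMap.comp_apply, sumForm_apply, LinearMap.mulLeft_apply, Pi.mul_apply]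
    refine Ideal.mem_span_singleton.mpr (Finset.dvd_sum fun i _ => ?_)
    exact (Finset.gcd_dvd (mem_univ i)).mul_right _
  · obtain ⟨c, hc⟩ := univ.gcd_eq_sum_mul b
    refine (Ideal.span_singleton_le_iff_mem _).mpr ⟨c, ?_⟩
    simp [hc]

lemma index_range_sumForm_comp_mulLeft (b : ι → ℤ) :
    (LinearMap.range (sumForm ι ∘ₗ LinearMap.mulLeft ℤ b)).toAddSubgroup.index =
      (univ.gcd b).natAbs := by
  rw [range_sumForm_comp_mulLeft, Ideal.span_singleton_toAddSubgroup_eq_zmultiples,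
    Int.index_zmultiples]

theorem relIndex_map_mulLeft_ker_sumForm_comp (b : ι → ℕ) (hb : univ.gcd b ≠ 0) :
    AddSubgroup.relIndex
      (Submodule.map (LinearMap.mulLeft ℤ fun i => (b i : ℤ))
        (LinearMap.ker (sumForm ι ∘ₗ LinearMap.mulLeft ℤ fun i => (b i : ℤ)))).toAddSubgroup
      (LinearMap.ker (sumForm ι)).toAddSubgroup = (∏ i, b i) / univ.gcd b := by
  have : Nonempty ι := by
    by_contra h
    simp [not_nonempty_iff.mp h] at hb
  have key := LinearMap.relIndex_map_ker_comp_mul_index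
    (LinearMap.mulLeft ℤ fun i => (b i : ℤ)) (sumForm ι) sumForm_surjective
  rw [index_range_mulLeft, index_range_sumForm_comp_mulLeft, ← natCast_gcd] at key
  simp only [Int.natAbs_natCast] at key
  exact (Nat.div_eq_of_eq_mul_left (Nat.pos_of_ne_zero hb) key.symm).symm

lemma mulMap_eq_mulLeft (p : ℕ) (b : Fin (p + 1) → ℕ) :
    mulMap p b = LinearMap.mulLeft ℤ fun i => (b i : ℤ) :=
  rfl

theorem stmt1 (p : ℕ) (b : Fin (p + 1) → ℕ) (hb : ∀ i, 0 < b i) :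
    AddSubgroup.relIndex
      (Submodule.map (mulMap p b)
        (LinearMap.ker (∑ i, (b i : ℤ) •
          (LinearMap.proj i : (Fin (p + 1) → ℤ) →ₗ[ℤ] ℤ)))).toAddSubgroup
      (LinearMap.ker (∑ i : Fin (p + 1),
        (LinearMap.proj i : (Fin (p + 1) → ℤ) →ₗ[ℤ] ℤ))).toAddSubgroup
      = (∏ i, b i) / Finset.univ.gcd b := by
  rw [mulMap_eq_mulLeft, ← sumForm_comp_mulLeft]
  exact relIndex_map_mulLeft_ker_sumForm_comp b
    fun h => (hb 0).ne' (gcd_eq_zero_iff.mp h 0 (mem_univ 0))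
end

section
/- Let V be a compact Hausdorff space, Δ ⊂ V a compact subset, 𝔻_r the closed disc of radius r, and π: V → 𝔻_r a continuous map with π^{-1}(0) = Δ. Suppose Log: V → Δ is a continuous retraction (Log|_Δ = id). Let (μ_t)_{t ∈ 𝔻_r*} be probability measures with μ_t supported on π^{-1}(t), and μ_0 a probability measure on Δ. If Log_*μ_t → μ_0 weakly as measures on Δ as t → 0, then μ_t → μ_0 weakly as measures on V. -/
/-!
Write `f = f ∘ Log + (f - f ∘ Log)`. The hypothesis handles the first summand. The second
is continuous and vanishes on `Δ = π⁻¹(0)`; since `π` is a closed map on the compact space `V`,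
the fibres `π⁻¹(t)` for small `t` lie in the open set where it is smaller than any given `ε`,
so its integrals against the fibrewise-supported probability measures `μ t` tend to `0`.
-/

open MeasureTheory Filter Topology

theorem eventually_preimage_singleton_subset {X Y : Type*} [TopologicalSpace X] [CompactSpace X]
    [TopologicalSpace Y] [T2Space Y] {π : X → Y} (hπ : Continuous π) {y : Y} {U : Set X}
    (hU : IsOpen U) (hyU : π ⁻¹' {y} ⊆ U) : ∀ᶠ t in 𝓝 y, π ⁻¹' {t} ⊆ U :=
  (isClosedMap_iff_kernImage.mp hπ.isClosedMap hU).mem_nhds fun _ hx => hyU hx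

theorem tendsto_integral_zero_of_eq_zero_on_fiber {X Y E : Type*} [TopologicalSpace X]
    [CompactSpace X] [MeasurableSpace X] [TopologicalSpace Y] [T2Space Y]
    [NormedAddCommGroup E] [NormedSpace ℝ E] {π : X → Y} (hπ : Continuous π) {y : Y}
    {l : Filter Y} (hl : l ≤ 𝓝 y) {μ : Y → Measure X}
    (hprob : ∀ᶠ t in l, IsProbabilityMeasure (μ t))
    (hsupp : ∀ᶠ t in l, μ t (π ⁻¹' {t})ᶜ = 0)
    {g : X → E} (hg : Continuous g) (hg0 : ∀ x, π x = y → g x = 0) :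
    Tendsto (fun t => ∫ x, g x ∂μ t) l (𝓝 0) := by
  rw [NormedAddGroup.tendsto_nhds_zero]
  intro ε hε
  have hsmall : ∀ᶠ t in l, π ⁻¹' {t} ⊆ {x | ‖g x‖ < ε / 2} :=
    hl <| eventually_preimage_singleton_subset hπ (isOpen_lt hg.norm continuous_const)
      fun x hx => by simp [hg0 x hx, half_pos hε]
  filter_upwards [hsmall, hprob, hsupp] with t hsmall hprob hsupp
  have hbound : ∀ᵐ x ∂μ t, ‖g x‖ ≤ ε / 2 := (ae_iff.mpr hsupp).mono fun _ hx => (hsmall hx).le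
  calc ‖∫ x, g x ∂μ t‖ ≤ ε / 2 * (μ t Set.univ).toReal := norm_integral_le_of_norm_le_const hbound
    _ = ε / 2 := by simp
    _ < ε := half_lt_self hε

theorem stmt7_general
    {V : Type*} [TopologicalSpace V] [CompactSpace V]
    [MeasurableSpace V] [BorelSpace V]
    (r : ℝ)
    (Δ : Set V) (π : V → ℂ) (hπ : Continuous π)
    (hΔ : Δ = π ⁻¹' {0})
    (Log : V → V) (hLog : Continuous Log)
    (hLogid : ∀ x ∈ Δ, Log x = x)
    (μ : ℂ → Measure V)
    (hprob : ∀ t : ℂ, t ≠ 0 → ‖t‖ ≤ r → IsProbabilityMeasure (μ t))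
    (hsupp : ∀ t : ℂ, t ≠ 0 → ‖t‖ ≤ r → μ t ((π ⁻¹' {t})ᶜ) = 0)
    (μ0 : Measure V)
    (hconv : ∀ f : V → ℝ, Continuous f →
      Tendsto (fun t => ∫ x, f (Log x) ∂(μ t))
        (𝓝[{t : ℂ | t ≠ 0 ∧ ‖t‖ ≤ r}] 0) (𝓝 (∫ x, f x ∂μ0))) :
    ∀ f : V → ℝ, Continuous f →
      Tendsto (fun t => ∫ x, f x ∂(μ t))
        (𝓝[{t : ℂ | t ≠ 0 ∧ ‖t‖ ≤ r}] 0) (𝓝 (∫ x, f x ∂μ0)) := by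
  intro f hf
  have hfLog : Continuous fun x => f (Log x) := hf.comp hLog
  have hprob' : ∀ᶠ t in 𝓝[{t : ℂ | t ≠ 0 ∧ ‖t‖ ≤ r}] 0, IsProbabilityMeasure (μ t) :=
    eventually_nhdsWithin_of_forall fun t ht => hprob t ht.1 ht.2
  have hdefect : Tendsto (fun t => ∫ x, (f x - f (Log x)) ∂μ t)
      (𝓝[{t : ℂ | t ≠ 0 ∧ ‖t‖ ≤ r}] 0) (𝓝 0) :=
    tendsto_integral_zero_of_eq_zero_on_fiber hπ nhdsWithin_le_nhds hprob'
      (eventually_nhdsWithin_of_forall fun t ht => hsupp t ht.1 ht.2) (hf.sub hfLog)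
      fun x hx => by rw [hLogid x (hΔ ▸ hx), sub_self]
  have hsum := (hconv f hf).add hdefect
  rw [add_zero] at hsum
  refine hsum.congr' (hprob'.mono fun t _ => ?_)
  have hint : ∀ {g : V → ℝ}, Continuous g → Integrable g (μ t) :=
    fun hg => hg.integrable_of_hasCompactSupport (.of_compactSpace _)
  dsimp only
  rw [integral_sub (hint hf) (hint hfLog)]
  ring

theorem stmt7
    {V : Type*} [TopologicalSpace V] [CompactSpace V] [T2Space V]
    [MeasurableSpace V] [BorelSpace V]
    (r : ℝ) (hr : 0 < r)
    (Δ : Set V) (π : V → ℂ) (hπ : Continuous π)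
    (hrange : ∀ x, ‖π x‖ ≤ r)
    (hΔ : Δ = π ⁻¹' {0})
    (Log : V → V) (hLog : Continuous Log)
    (hLogΔ : ∀ x, Log x ∈ Δ) (hLogid : ∀ x ∈ Δ, Log x = x)
    (μ : ℂ → Measure V)
    (hprob : ∀ t : ℂ, t ≠ 0 → ‖t‖ ≤ r → IsProbabilityMeasure (μ t))
    (hsupp : ∀ t : ℂ, t ≠ 0 → ‖t‖ ≤ r → μ t ((π ⁻¹' {t})ᶜ) = 0)
    (μ0 : Measure V) (hprob0 : IsProbabilityMeasure μ0) (hsupp0 : μ0 Δᶜ = 0)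
    (hconv : ∀ f : V → ℝ, Continuous f →
      Tendsto (fun t => ∫ x, f (Log x) ∂(μ t))
        (𝓝[{t : ℂ | t ≠ 0 ∧ ‖t‖ ≤ r}] 0) (𝓝 (∫ x, f x ∂μ0))) :
    ∀ f : V → ℝ, Continuous f →
      Tendsto (fun t => ∫ x, f x ∂(μ t))
        (𝓝[{t : ℂ | t ≠ 0 ∧ ‖t‖ ≤ r}] 0) (𝓝 (∫ x, f x ∂μ0)) :=
  stmt7_general r Δ π hπ hΔ Log hLog hLogid μ hprob hsupp μ0 hconv
end

section
/- Let σ = {w ∈ ℝ_{≥0}^{p+1} : ∑ b_i w_i = 1} and σ' = {w' ∈ ℝ_{≥0}^{p+1} : ∑ b_i w'_i = m}, the latter with integral affine structure given by the lattice M' = ℤ^{p+1} + ℤ(b_0/m,…,b_p/m). Under the homeomorphism σ' → σ, w = w'/m, one has: (i) the normalized volume satisfies Vol(σ') = m^{dim σ} Vol(σ); (ii) the integer b_{σ'} (largest integer whose reciprocal constant function is integral affine on σ') equals b_σ/gcd(m, b_σ), where b_σ = gcd(b_i). -/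
/- STATEMENT 12: Under the homeomorphism w = w'/m between
σ' = {∑ b_i w'_i = m} (with integral affine structure given by the lattice
M' = ℤ^{p+1} + ℤ(b_0/m,…,b_p/m)) and σ = {∑ b_i w_i = 1}:
(i) the normalized volume satisfies Vol(σ') = m^{dim σ} Vol(σ), the normalized
volumes being computed via any ℤ-basis of the tangent lattice
{v ∈ ℤ^{p+1} : ∑ b_i v_i = 0} and any basepoints on the two hyperplanes;
(ii) b_{σ'}, the largest integer whose reciprocal constant function is integral
affine on σ' for the M'-structure, equals b_σ/gcd(m, b_σ), where b_σ = gcd(b_i). -/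

open MeasureTheory

noncomputable def sumCoeff12 (p : ℕ) (b : Fin (p + 1) → ℕ) : (Fin (p + 1) → ℤ) →ₗ[ℤ] ℤ :=
  ∑ i, (b i : ℤ) • LinearMap.proj i

open Pointwise

/-!
(i) The integral tangent lattice spans the real tangent hyperplane `∑ bᵢ vᵢ = 0` (the vectors
`bⱼ e_{i₀} - b_{i₀} eⱼ` already do), so `w0'/m - w0` is a real combination `t` of the basis. The
chart at `w0'` is then `x ↦ m • (chart at w0) (t + x/m)`, and `σ' = m • σ`, so the preimage of `σ'`
is the `m`-dilate of a translate of the preimage of `σ`.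

(ii) Write `ξ = n + a • b/m` with `n` integral. If `ξ • w + c = 1/k` on `σ'`, evaluating at the
vertices `(m/bᵢ) eᵢ` gives `k m ∣ bᵢ (1 - (a + c) k)` for all `i`, hence `k m ∣ b_σ r` with `r`
coprime to `k`; dividing by `g = gcd(m, b_σ)` forces `k ∣ b_σ/g`. Conversely `b/(m b_σ/g)` lies
in `M'` by Bézout for the coprime pair `m/g`, `b_σ/g`, and takes the value `g/b_σ` on `σ'`.
-/

theorem sumCoeff12_apply (p : ℕ) (b : Fin (p + 1) → ℕ) (u : Fin (p + 1) → ℤ) :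
    sumCoeff12 p b u = ∑ i, (b i : ℤ) * u i := by
  simp [sumCoeff12]

section Slice

variable {ι : Type*} [Fintype ι]

def simplexSlice (b : ι → ℝ) (r : ℝ) : Set (ι → ℝ) :=
  {w | (∀ i, 0 ≤ w i) ∧ ∑ i, b i * w i = r}

theorem simplexSlice_mul (b : ι → ℝ) {r : ℝ} (hr : 0 < r) (s : ℝ) :
    simplexSlice b (r * s) = r • simplexSlice b s := by
  ext w
  simp only [Set.mem_smul_set_iff_inv_smul_mem₀ hr.ne', simplexSlice, Set.mem_ofPred_eq,
    Pi.smul_apply, smul_eq_mul, mul_left_comm _ r⁻¹, ← Finset.mul_sum,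
    inv_mul_eq_iff_eq_mul₀ hr.ne', mul_nonneg_iff_of_pos_left (inv_pos.mpr hr)]

theorem single_mem_simplexSlice [DecidableEq ι] {b : ι → ℝ} {i : ι}
    (hb : 0 < b i) {r : ℝ} (hr : 0 ≤ r) : Pi.single i (r / b i) ∈ simplexSlice b r := by
  refine ⟨fun j => ?_, ?_⟩
  · rcases eq_or_ne j i with rfl | hji
    · simpa using div_nonneg hr hb.le
    · simp [hji]
  · simp only [Pi.single_apply, mul_ite, mul_zero, Finset.sum_ite_eq', Finset.mem_univ, if_true]
    exact mul_div_cancel₀ r hb.ne'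

theorem mul_add_mul_eq_of_forall_mem_simplexSlice [DecidableEq ι]
    {b ξ : ι → ℝ} {r c s : ℝ} (hr : 0 ≤ r)
    (h : ∀ w ∈ simplexSlice b r, ∑ i, ξ i * w i + c = s) {i : ι} (hb : 0 < b i) :
    ξ i * r + c * b i = s * b i := by
  have hi := h _ (single_mem_simplexSlice hb hr)
  simp only [Pi.single_apply, mul_ite, mul_zero, Finset.sum_ite_eq', Finset.mem_univ,
    if_true] at hi
  rw [← hi, add_mul, mul_assoc, div_mul_cancel₀ r hb.ne']

end Slice

theorem addHaar_preimage_smul_affine {E F : Type*} [NormedAddCommGroup E] [NormedSpace ℝ E]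
    [MeasurableSpace E] [BorelSpace E] [FiniteDimensional ℝ E] (μ : Measure E)
    [μ.IsAddHaarMeasure] [AddCommGroup F] [Module ℝ F] (L : E →ₗ[ℝ] F) (w₀ : F) (t : E)
    {r : ℝ} (hr : 0 < r) (S : Set F) :
    μ ((fun x => r • (w₀ + L t) + L x) ⁻¹' (r • S))
      = ENNReal.ofReal (r ^ Module.finrank ℝ E) * μ ((fun x => w₀ + L x) ⁻¹' S) := by
  have hpre : (fun x => r • (w₀ + L t) + L x) ⁻¹' (r • S)
      = r • (-t +ᵥ (fun x => w₀ + L x) ⁻¹' S) := by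
    ext x
    simp only [Set.mem_preimage, Set.mem_smul_set_iff_inv_smul_mem₀ hr.ne',
      Set.mem_vadd_set_iff_neg_vadd_mem, neg_neg, vadd_eq_add, map_add, map_smul, smul_add,
      inv_smul_smul₀ hr.ne', add_assoc]
  rw [hpre, Measure.addHaar_smul_of_nonneg μ hr.le, measure_vadd]

theorem mem_span_image_intCast_of_sum_mul_eq_zero {ι : Type*} [Fintype ι] [DecidableEq ι]
    (b : ι → ℤ) {i₀ : ι} (hb : b i₀ ≠ 0) {d : ι → ℝ} (hd : ∑ i, (b i : ℝ) * d i = 0) :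
    d ∈ Submodule.span ℝ
      ((fun u : ι → ℤ => fun i => (u i : ℝ)) '' {u | ∑ i, b i * u i = 0}) := by
  set u : ι → ι → ℤ := fun j => b j • Pi.single i₀ 1 - b i₀ • Pi.single j 1
  have hu : ∀ j, ∑ i, b i * u j i = 0 := by
    intro j
    simp [u, mul_sub, Finset.sum_sub_distrib, Pi.single_apply, mul_comm]
  have hdecomp : d = ∑ j, (-d j / b i₀) • fun i => (u j i : ℝ) := by
    have hb' : (b i₀ : ℝ) ≠ 0 := Int.cast_ne_zero.mpr hb
    have hsum : ∑ j, -d j / b i₀ * b j = 0 := by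
      simp_rw [neg_div, neg_mul, Finset.sum_neg_distrib, div_mul_eq_mul_div, ← Finset.sum_div,
        mul_comm (d _), hd, zero_div, neg_zero]
    ext k
    simp only [u, zsmul_eq_mul, Pi.sub_apply, Pi.mul_apply, Pi.intCast_apply, Int.cast_eq,
      Pi.single_apply, mul_ite, mul_one, mul_zero, Int.cast_sub, Int.cast_ite, Int.cast_zero,
      Finset.sum_apply, Pi.smul_apply, smul_eq_mul, mul_sub, Finset.sum_sub_distrib,
      Finset.sum_ite_irrel, Finset.sum_const_zero, Finset.sum_ite_eq, Finset.mem_univ, if_true]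
    rw [hsum, ite_self, zero_sub, neg_div, neg_mul, neg_neg, div_mul_cancel₀ _ hb']
  rw [hdecomp]
  exact Submodule.sum_mem _ fun j _ =>
    Submodule.smul_mem _ _ (Submodule.subset_span ⟨u j, hu j, rfl⟩)

theorem Module.Basis.map_mem_span_range {ι R M N : Type*} [Fintype ι] [Ring R] [AddCommGroup M]
    [AddCommGroup N] [Module R N] {K : Submodule ℤ M} (v : Module.Basis ι ℤ K) (f : M →+ N)
    (z : K) : f z ∈ Submodule.span R (Set.range fun j => f (v j)) := by
  rw [← v.sum_repr z]
  simp only [Submodule.coe_sum, Submodule.coe_smul, map_sum, map_zsmul]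
  refine Submodule.sum_mem _ fun j _ => zsmul_mem (Submodule.subset_span ?_) _
  exact ⟨j, rfl⟩

theorem volume_preimage_simplexSlice (p m : ℕ) (hm : 0 < m) (b : Fin (p + 1) → ℕ)
    {i₀ : Fin (p + 1)} (hb : b i₀ ≠ 0) (v : Module.Basis (Fin p) ℤ (LinearMap.ker (sumCoeff12 p b)))
    (w0 w0' : Fin (p + 1) → ℝ) (h1 : ∑ i, (b i : ℝ) * w0 i = 1)
    (h2 : ∑ i, (b i : ℝ) * w0' i = m) :
    volume ((fun x : Fin p → ℝ => fun i => w0' i + ∑ j, x j * ((v j : Fin (p + 1) → ℤ) i : ℝ))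
        ⁻¹' simplexSlice (fun i => (b i : ℝ)) m)
      = (m : ENNReal) ^ p *
        volume ((fun x : Fin p → ℝ => fun i => w0 i + ∑ j, x j * ((v j : Fin (p + 1) → ℤ) i : ℝ))
          ⁻¹' simplexSlice (fun i => (b i : ℝ)) 1) := by
  have hmR : (0 : ℝ) < m := Nat.cast_pos.mpr hm
  set c : Fin p → Fin (p + 1) → ℝ := fun j => (Int.castAddHom ℝ).compLeft _ (v j)
  set L := Fintype.linearCombination ℝ c
  have hL : ∀ w : Fin (p + 1) → ℝ,
      (fun x : Fin p → ℝ => fun i => w i + ∑ j, x j * ((v j : Fin (p + 1) → ℤ) i : ℝ))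
        = fun x => w + L x := by
    intro w
    ext x i
    simp [L, c, Fintype.linearCombination_apply, Finset.sum_apply]
  obtain ⟨t, ht⟩ : (m : ℝ)⁻¹ • w0' - w0 ∈ LinearMap.range L := by
    rw [Fintype.range_linearCombination]
    refine Submodule.span_le.mpr ?_ (mem_span_image_intCast_of_sum_mul_eq_zero (fun i => (b i : ℤ))
      (Int.natCast_ne_zero.mpr hb) ?_)
    · rintro _ ⟨u, hu, rfl⟩
      exact v.map_mem_span_range ((Int.castAddHom ℝ).compLeft _) ⟨u, by
        rwa [LinearMap.mem_ker, sumCoeff12_apply]⟩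
    · simp only [Pi.sub_apply, Pi.smul_apply, smul_eq_mul, mul_sub, Finset.sum_sub_distrib,
        Int.cast_natCast, mul_left_comm _ (m : ℝ)⁻¹, ← Finset.mul_sum, h1, h2,
        inv_mul_cancel₀ hmR.ne', sub_self]
  have hw0' : w0' = (m : ℝ) • (w0 + L t) := by
    rw [ht, add_sub_cancel, smul_inv_smul₀ hmR.ne']
  rw [hL, hL, hw0', ← mul_one (m : ℝ), simplexSlice_mul _ hmR, mul_one,
    addHaar_preimage_smul_affine volume L w0 t hmR, Module.finrank_fin_fun,
    ENNReal.ofReal_pow hmR.le, ENNReal.ofReal_natCast]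

theorem mem_closure_range_single_iff {ι R : Type*} [Fintype ι] [DecidableEq ι] [Ring R]
    {x : ι → R} :
    x ∈ AddSubgroup.closure (Set.range fun i => (Pi.single i 1 : ι → R))
      ↔ ∀ i, ∃ n : ℤ, x i = n := by
  constructor
  · intro hx
    have hle : AddSubgroup.closure (Set.range fun i => (Pi.single i 1 : ι → R))
        ≤ AddSubgroup.pi Set.univ fun _ => (Int.castAddHom R).range := by
      rw [AddSubgroup.closure_le]
      rintro _ ⟨i, rfl⟩ j -
      rcases eq_or_ne j i with rfl | hji
      · exact ⟨1, by simp⟩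
      · exact ⟨0, by simp [hji]⟩
    intro i
    obtain ⟨n, hn⟩ := hle hx i (Set.mem_univ i)
    exact ⟨n, hn.symm⟩
  · intro hx
    choose n hn using hx
    have hsum : x = ∑ i, n i • (Pi.single i 1 : ι → R) := by
      ext j
      simp [hn, Pi.single_apply]
    rw [hsum]
    refine AddSubgroup.sum_mem _ fun i _ => zsmul_mem (AddSubgroup.subset_closure ?_) _
    exact ⟨i, rfl⟩

theorem le_div_gcd_of_mul_dvd_mul {k m B r : ℕ} (hB : 0 < B) (hkr : k.Coprime r)
    (h : k * m ∣ B * r) : k ≤ B / m.gcd B := by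
  have hg : 0 < m.gcd B := Nat.gcd_pos_of_pos_right m hB
  obtain ⟨m₁, hm₁⟩ := Nat.gcd_dvd_left m B
  obtain ⟨B₁, hB₁⟩ := Nat.gcd_dvd_right m B
  generalize m.gcd B = g at hg hm₁ hB₁ ⊢
  subst hm₁ hB₁
  have hdvd : k * m₁ ∣ B₁ * r := by
    rw [mul_left_comm, mul_assoc] at h
    exact (mul_dvd_mul_iff_left hg.ne').mp h
  rw [Nat.mul_div_cancel_left _ hg]
  exact Nat.le_of_dvd (Nat.pos_of_mul_pos_left hB)
    (hkr.dvd_of_dvd_mul_right (dvd_of_mul_right_dvd hdvd))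

theorem Finset.gcd_univ_pos {ι : Type*} [Fintype ι] [Nonempty ι] {b : ι → ℕ}
    (hb : ∀ i, 0 < b i) : 0 < Finset.univ.gcd b :=
  Nat.pos_of_ne_zero fun h0 =>
    (hb (Classical.arbitrary ι)).ne' (Finset.gcd_eq_zero_iff.mp h0 _ (Finset.mem_univ _))

def rescaledLattice {ι : Type*} [Fintype ι] [DecidableEq ι] (b : ι → ℕ) (m : ℕ) :
    AddSubgroup (ι → ℚ) :=
  AddSubgroup.closure (Set.range fun i => (Pi.single i 1 : ι → ℚ))
    ⊔ AddSubgroup.closure {fun i => (b i : ℚ) / m}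

section Reciprocal

variable {ι : Type*} [Fintype ι] [DecidableEq ι] {b : ι → ℕ} {m : ℕ}

theorem exists_int_of_mem_rescaledLattice {ξ : ι → ℚ} (hξ : ξ ∈ rescaledLattice b m) :
    ∃ (n : ι → ℤ) (a : ℤ), ∀ i, ξ i = n i + a * b i / m := by
  obtain ⟨x, hx, y, hy, rfl⟩ := AddSubgroup.mem_sup.mp hξ
  obtain ⟨a, rfl⟩ := AddSubgroup.mem_closure_singleton.mp hy
  choose n hn using mem_closure_range_single_iff.mp hx
  exact ⟨n, a, fun i => by simp [hn, mul_div_assoc]⟩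

theorem div_mem_rescaledLattice (hm : 0 < m) {B : ℕ} (hB : 0 < B) (hBb : ∀ i, B ∣ b i) :
    (fun i => (b i : ℚ) / (m * (B / m.gcd B : ℕ))) ∈ rescaledLattice b m := by
  obtain ⟨m₁, B₁, hcop, hmg, hBg⟩ := Nat.exists_coprime m B
  obtain ⟨s, j, hsj⟩ := Nat.isCoprime_iff_coprime.mpr hcop
  refine AddSubgroup.mem_sup.mpr ⟨fun i => ((b i / B : ℕ) : ℚ) * s, ?_,
    j • fun i => (b i : ℚ) / m, zsmul_mem (AddSubgroup.subset_closure (Set.mem_singleton _)) _, ?_⟩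
  · exact mem_closure_range_single_iff.mpr fun i =>
      ⟨(b i / B : ℕ) * s, by rw [Int.cast_mul, Int.cast_natCast]⟩
  · have hg : 0 < m.gcd B := Nat.gcd_pos_of_pos_left B hm
    have hmQ : (m : ℚ) = m₁ * m.gcd B := by exact_mod_cast hmg
    have hBQ : (B : ℚ) = B₁ * m.gcd B := by exact_mod_cast hBg
    have hsjQ : (s : ℚ) * m₁ + j * B₁ = 1 := by exact_mod_cast hsj
    have hm₁ : (m₁ : ℚ) ≠ 0 := Nat.cast_ne_zero.mpr (by rintro rfl; omega)
    have hB₁ : (B₁ : ℚ) ≠ 0 := Nat.cast_ne_zero.mpr (by rintro rfl; omega)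
    ext i
    obtain ⟨q, hq⟩ := hBb i
    rw [Pi.add_apply, Pi.smul_apply, zsmul_eq_mul]
    simp only [hq, Nat.mul_div_cancel_left q hB, Nat.div_eq_of_eq_mul_left hg hBg]
    push_cast
    rw [hmQ, hBQ]
    field_simp
    linear_combination (q : ℚ) * hsjQ

theorem le_div_gcd_of_forall_mem_simplexSlice [Nonempty ι] (hm : 0 < m) (hb : ∀ i, 0 < b i)
    {k : ℕ} (hk : 0 < k) {n : ι → ℤ} {a c : ℤ}
    (h : ∀ w ∈ simplexSlice (fun i => (b i : ℝ)) m,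
      ∑ i, (n i + a * b i / m : ℝ) * w i + c = (k : ℝ)⁻¹) :
    k ≤ Finset.univ.gcd b / m.gcd (Finset.univ.gcd b) := by
  set r : ℤ := 1 - (a + c) * k
  have hdvd : ∀ i, k * m ∣ b i * r.natAbs := by
    intro i
    have hi := mul_add_mul_eq_of_forall_mem_simplexSlice (Nat.cast_nonneg m) h
      (Nat.cast_pos.mpr (hb i))
    have hmR : (m : ℝ) ≠ 0 := Nat.cast_ne_zero.mpr hm.ne'
    have hkR : (k : ℝ) ≠ 0 := Nat.cast_ne_zero.mpr hk.ne'
    have hZ : (b i : ℤ) * r = k * m * n i := by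
      field_simp at hi
      have hR : ((b i : ℤ) * r : ℝ) = k * m * n i := by
        simp only [r]
        push_cast
        linear_combination -hi
      exact_mod_cast hR
    have := Int.natAbs_dvd_natAbs.mpr (Dvd.intro _ hZ.symm)
    simpa [Int.natAbs_mul] using this
  have hgcd : k * m ∣ Finset.univ.gcd b * r.natAbs := by
    have := Finset.dvd_gcd (s := Finset.univ) fun i _ => hdvd i
    rwa [Finset.gcd_mul_right, normalize_eq] at this
  have hcop : k.Coprime r.natAbs := by
    have : IsCoprime (k : ℤ) r := ⟨a + c, 1, by ring⟩
    rwa [Int.isCoprime_iff_gcd_eq_one, Int.gcd, Int.natAbs_natCast] at this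
  exact le_div_gcd_of_mul_dvd_mul (Finset.gcd_univ_pos hb) hcop hgcd

theorem isGreatest_reciprocal_integral_affine (hm : 0 < m) (hb : ∀ i, 0 < b i) [Nonempty ι] :
    IsGreatest {k : ℕ | 0 < k ∧ ∃ ξ ∈ rescaledLattice b m, ∃ c : ℤ,
        ∀ w : ι → ℝ, (∀ i, 0 ≤ w i) → ∑ i, (b i : ℝ) * w i = m →
          ∑ i, (ξ i : ℝ) * w i + (c : ℝ) = (k : ℝ)⁻¹}
      (Finset.univ.gcd b / m.gcd (Finset.univ.gcd b)) := by
  set B := Finset.univ.gcd b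
  have hB : 0 < B := Finset.gcd_univ_pos hb
  have hB₁ : 0 < B / m.gcd B :=
    Nat.div_pos (Nat.le_of_dvd hB (Nat.gcd_dvd_right m B)) (Nat.gcd_pos_of_pos_left B hm)
  refine ⟨⟨hB₁, _, div_mem_rescaledLattice hm hB fun i => Finset.gcd_dvd (Finset.mem_univ i), 0,
    fun w _ hw => ?_⟩, ?_⟩
  · have hmR : (m : ℝ) ≠ 0 := Nat.cast_ne_zero.mpr hm.ne'
    have hB₁R : ((B / m.gcd B : ℕ) : ℝ) ≠ 0 := Nat.cast_ne_zero.mpr hB₁.ne'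
    simp only [Rat.cast_div, Rat.cast_mul, Rat.cast_natCast, Int.cast_zero, add_zero,
      div_mul_eq_mul_div, ← Finset.sum_div, hw]
    field_simp
  · rintro k ⟨hk, ξ, hξ, c, h⟩
    obtain ⟨n, a, hna⟩ := exists_int_of_mem_rescaledLattice hξ
    exact le_div_gcd_of_forall_mem_simplexSlice hm hb hk fun w hw => by
      simpa [hna] using h w hw.1 hw.2

end Reciprocal

theorem stmt12 (p m : ℕ) (hm : 0 < m) (b : Fin (p + 1) → ℕ) (hb : ∀ i, 0 < b i) :
    -- (i) Vol(σ') = m^p · Vol(σ)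
    (∀ (v : Module.Basis (Fin p) ℤ (LinearMap.ker (sumCoeff12 p b))) (w0 w0' : Fin (p + 1) → ℝ),
      (∑ i, (b i : ℝ) * w0 i = 1) → (∑ i, (b i : ℝ) * w0' i = m) →
      volume ((fun x : Fin p → ℝ => fun i => w0' i + ∑ j, x j * ((v j : Fin (p + 1) → ℤ) i : ℝ))
          ⁻¹' {w : Fin (p + 1) → ℝ | (∀ i, 0 ≤ w i) ∧ ∑ i, (b i : ℝ) * w i = m})
        = (m : ENNReal) ^ p *
          volume ((fun x : Fin p → ℝ => fun i => w0 i + ∑ j, x j * ((v j : Fin (p + 1) → ℤ) i : ℝ))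
            ⁻¹' {w : Fin (p + 1) → ℝ | (∀ i, 0 ≤ w i) ∧ ∑ i, (b i : ℝ) * w i = 1})) ∧
    -- (ii) b_{σ'} = b_σ / gcd(m, b_σ)
    IsGreatest {k : ℕ | 0 < k ∧
        ∃ ξ ∈ (AddSubgroup.closure
            (Set.range fun i : Fin (p + 1) => (Pi.single i 1 : Fin (p + 1) → ℚ))
          ⊔ AddSubgroup.closure {fun i : Fin (p + 1) => (b i : ℚ) / m}),
        ∃ c : ℤ, ∀ w : Fin (p + 1) → ℝ, (∀ i, 0 ≤ w i) → (∑ i, (b i : ℝ) * w i = m) →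
          ∑ i, (ξ i : ℝ) * w i + (c : ℝ) = (k : ℝ)⁻¹}
      (Finset.univ.gcd b / Nat.gcd m (Finset.univ.gcd b)) :=
  ⟨fun v w0 w0' h1 h2 => volume_preimage_simplexSlice p m hm b (hb 0).ne' v w0 w0' h1 h2,
    isGreatest_reciprocal_integral_affine hm hb⟩
end

section
/- Let ℂ_hyb denote ℂ equipped with the hybrid norm ‖z‖_hyb = max(|z|_0, |z|_∞), where |·|_0 is the trivial absolute value and |·|_∞ the usual one. Then every bounded multiplicative seminorm on ℂ_hyb is of the form |·|_∞^ρ for a unique ρ ∈ [0,1] (with ρ = 0 giving the trivial absolute value), and the resulting map ℳ(ℂ_hyb) → [0,1] is a homeomorphism for the topology of pointwise convergence. -/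
/- STATEMENT 14: The Berkovich spectrum of ℂ with the hybrid norm
‖z‖_hyb = max(|z|₀, |z|_∞) consists exactly of the seminorms |·|_∞^ρ, ρ ∈ [0,1]
(ρ = 0 giving the trivial absolute value), and the identification with [0,1]
is a homeomorphism for the topology of pointwise convergence. -/

/-- A bounded multiplicative seminorm on ℂ equipped with the hybrid norm
`‖z‖_hyb = max(|z|_∞, |z|₀)`, where `|·|₀` is the trivial absolute value. -/
def IsHybridSeminorm (N : ℂ → ℝ) : Prop :=
  (∀ z, 0 ≤ N z) ∧ N 0 = 0 ∧ N 1 = 1 ∧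
  (∀ z w, N (z * w) = N z * N w) ∧
  (∀ z w, N (z + w) ≤ N z + N w) ∧
  (∀ z, N z ≤ max ‖z‖ (if z = 0 then 0 else 1))

/-- The seminorm `|·|_∞^ρ`, interpreted as the trivial absolute value for ρ = 0. -/
noncomputable def hybPow (ρ : ℝ) (z : ℂ) : ℝ :=
  if z = 0 then 0 else ‖z‖ ^ ρ

/-!
A bounded multiplicative seminorm `N` on `ℂ_hyb` is `1` on the unit circle, since `N z ≤ 1` and
`N z⁻¹ ≤ 1` there; hence `N z = N ‖z‖` depends only on `|z|`. On `r = eᵗ` with `t ≥ 0` the bound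
gives `1 ≤ N r ≤ r`, so `t ↦ log N(eᵗ)` is an additive function squeezed between `0` and `t`
for `t ≥ 0`. Such a function is `1`-Lipschitz, hence linear, `t ↦ ρ t` with `ρ ∈ [0, 1]`, which
says `N = |·|_∞^ρ`. Conversely each `|·|_∞^ρ` is such a seminorm, `ρ` is read off from the value at
`2`, and `ρ ↦ |·|_∞^ρ` is a continuous bijection from the compact interval `[0, 1]` onto a
Hausdorff space, hence a homeomorphism.
-/

open Real

theorem AddMonoidHom.apply_eq_mul_of_mem_Icc (f : ℝ →+ ℝ)
    (hf : ∀ t, 0 ≤ t → f t ∈ Set.Icc 0 t) (t : ℝ) : f t = f 1 * t := by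
  have hbound : ∀ s, ‖f s‖ ≤ 1 * ‖s‖ := by
    intro s
    rcases le_total 0 s with hs | hs
    · obtain ⟨h0, h1⟩ := hf s hs
      simp [abs_of_nonneg hs, abs_of_nonneg h0, h1]
    · obtain ⟨h0, h1⟩ := hf (-s) (neg_nonneg.2 hs)
      rw [map_neg] at h0 h1
      simp only [Real.norm_eq_abs, one_mul, abs_of_nonpos hs, abs_of_nonpos (neg_nonneg.1 h0)]
      linarith
  simpa [mul_comm] using map_real_smul f (AddMonoidHomClass.continuous_of_bound f 1 hbound) t 1

namespace IsHybridSeminorm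

variable {N : ℂ → ℝ}

theorem apply_mul (hN : IsHybridSeminorm N) (z w : ℂ) : N (z * w) = N z * N w :=
  hN.2.2.2.1 z w

theorem apply_mul_apply_inv (hN : IsHybridSeminorm N) {z : ℂ} (hz : z ≠ 0) :
    N z * N z⁻¹ = 1 := by
  rw [← hN.apply_mul, mul_inv_cancel₀ hz, hN.2.2.1]

theorem apply_pos (hN : IsHybridSeminorm N) {z : ℂ} (hz : z ≠ 0) : 0 < N z :=
  (hN.1 z).lt_of_ne fun h => by simpa [← h] using hN.apply_mul_apply_inv hz

theorem apply_le_max (hN : IsHybridSeminorm N) {z : ℂ} (hz : z ≠ 0) : N z ≤ max ‖z‖ 1 := by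
  simpa [hz] using hN.2.2.2.2.2 z

theorem one_le_apply (hN : IsHybridSeminorm N) {z : ℂ} (hz : 1 ≤ ‖z‖) : 1 ≤ N z := by
  have hz0 : z ≠ 0 := norm_pos_iff.1 (zero_lt_one.trans_le hz)
  have hinv : N z⁻¹ ≤ 1 := by
    simpa [norm_inv, inv_le_one_of_one_le₀ hz] using hN.apply_le_max (inv_ne_zero hz0)
  calc 1 = N z * N z⁻¹ := (hN.apply_mul_apply_inv hz0).symm
    _ ≤ N z * 1 := by gcongr; exact hN.1 z
    _ = N z := mul_one _

theorem apply_eq_one_of_norm_eq_one (hN : IsHybridSeminorm N) {z : ℂ} (hz : ‖z‖ = 1) :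
    N z = 1 :=
  le_antisymm (by simpa [hz] using hN.apply_le_max (norm_ne_zero_iff.1 (hz.trans_ne one_ne_zero)))
    (hN.one_le_apply hz.ge)

theorem apply_eq_apply_norm (hN : IsHybridSeminorm N) (z : ℂ) : N z = N ‖z‖ := by
  rcases eq_or_ne z 0 with rfl | hz
  · simp
  have hr : ((‖z‖ : ℝ) : ℂ) ≠ 0 := by simpa using hz
  calc N z = N (‖z‖ * (z / ‖z‖)) := by rw [mul_div_cancel₀ _ hr]
    _ = N ‖z‖ := by
      rw [hN.apply_mul, hN.apply_eq_one_of_norm_eq_one (z := z / ‖z‖) (by simp [hz]),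
        mul_one]

noncomputable def logExp (hN : IsHybridSeminorm N) : ℝ →+ ℝ :=
  AddMonoidHom.mk' (fun t => log (N (exp t))) fun s t => by
    rw [exp_add, Complex.ofReal_mul, hN.apply_mul,
      log_mul (hN.apply_pos (by simp)).ne' (hN.apply_pos (by simp)).ne']

theorem logExp_apply (hN : IsHybridSeminorm N) (t : ℝ) : hN.logExp t = log (N (exp t)) := rfl

theorem logExp_mem_Icc (hN : IsHybridSeminorm N) {t : ℝ} (ht : 0 ≤ t) :
    hN.logExp t ∈ Set.Icc 0 t := by
  have hone : 1 ≤ exp t := one_le_exp ht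
  refine ⟨log_nonneg (hN.one_le_apply (by simpa using hone)), ?_⟩
  calc hN.logExp t ≤ log (exp t) := by
        refine log_le_log (hN.apply_pos (by simp)) ?_
        simpa [max_eq_left hone] using hN.apply_le_max (z := exp t) (by simp)
    _ = t := log_exp t

theorem eq_hybPow (hN : IsHybridSeminorm N) : N = hybPow (hN.logExp 1) := by
  funext z
  rcases eq_or_ne z 0 with rfl | hz
  · simp [hybPow, hN.2.1]
  have hr : 0 < ‖z‖ := norm_pos_iff.2 hz
  have hlog : log (N z) = hN.logExp 1 * log ‖z‖ := by
    rw [← hN.logExp.apply_eq_mul_of_mem_Icc (fun _ => hN.logExp_mem_Icc), logExp_apply,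
      exp_log hr, ← hN.apply_eq_apply_norm]
  rw [hybPow, if_neg hz, rpow_def_of_pos hr, mul_comm, ← hlog, exp_log (hN.apply_pos hz)]

end IsHybridSeminorm

theorem isHybridSeminorm_hybPow {ρ : ℝ} (h0 : 0 ≤ ρ) (h1 : ρ ≤ 1) :
    IsHybridSeminorm (hybPow ρ) := by
  refine ⟨fun z => ?_, by simp [hybPow], by simp [hybPow], fun z w => ?_, fun z w => ?_,
    fun z => ?_⟩
  · unfold hybPow; split_ifs <;> positivity
  · rcases eq_or_ne z 0 with rfl | hz
    · simp [hybPow]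
    rcases eq_or_ne w 0 with rfl | hw
    · simp [hybPow]
    simp [hybPow, hz, hw, mul_rpow]
  · rcases eq_or_ne z 0 with rfl | hz
    · simp [hybPow]
    rcases eq_or_ne w 0 with rfl | hw
    · simp [hybPow]
    unfold hybPow
    split_ifs
    · positivity
    calc ‖z + w‖ ^ ρ ≤ (‖z‖ + ‖w‖) ^ ρ := by gcongr; exact norm_add_le z w
      _ ≤ ‖z‖ ^ ρ + ‖w‖ ^ ρ := rpow_add_le_add_rpow (norm_nonneg z) (norm_nonneg w) h0 h1
  · rcases eq_or_ne z 0 with rfl | hz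
    · simp [hybPow]
    simp only [hybPow, if_neg hz]
    rcases le_total ‖z‖ 1 with hle | hge
    · exact le_max_of_le_right (rpow_le_one (norm_nonneg z) hle h0)
    · exact le_max_of_le_left ((rpow_le_rpow_of_exponent_le hge h1).trans_eq (rpow_one _))

theorem hybPow_injective : Function.Injective hybPow := fun ρ ρ' h => by
  simpa [hybPow, rpow_right_inj] using congrFun h 2

theorem continuous_hybPow : Continuous hybPow := by
  refine continuous_pi fun z => ?_
  rcases eq_or_ne z 0 with rfl | hz
  · simpa [hybPow] using continuous_const
  · simpa [hybPow, hz] using continuous_const.rpow continuous_id fun _ => Or.inl (by simpa)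

theorem stmt14 :
    (∀ N : ℂ → ℝ, IsHybridSeminorm N →
      ∃! ρ : ℝ, ρ ∈ Set.Icc (0 : ℝ) 1 ∧ N = hybPow ρ) ∧
    ∃ h : (Set.Icc (0 : ℝ) 1) ≃ₜ {N : ℂ → ℝ // IsHybridSeminorm N},
      ∀ ρ : Set.Icc (0 : ℝ) 1, ((h ρ : ℂ → ℝ)) = hybPow ρ := by
  refine ⟨fun N hN => ⟨_, ⟨hN.logExp_mem_Icc zero_le_one, hN.eq_hybPow⟩,
    fun ρ hρ => hybPow_injective (hρ.2.symm.trans hN.eq_hybPow)⟩, ?_⟩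
  let φ : Set.Icc (0 : ℝ) 1 → {N : ℂ → ℝ // IsHybridSeminorm N} :=
    fun ρ => ⟨hybPow ρ, isHybridSeminorm_hybPow ρ.2.1 ρ.2.2⟩
  have hφ : Function.Bijective φ :=
    ⟨fun ρ ρ' h => Subtype.ext (hybPow_injective (congrArg Subtype.val h)),
      fun N => ⟨⟨_, N.2.logExp_mem_Icc zero_le_one⟩, Subtype.ext N.2.eq_hybPow.symm⟩⟩
  have hcont : Continuous φ := (continuous_hybPow.comp continuous_subtype_val).subtype_mk _
  exact ⟨Continuous.homeoOfEquivCompactToT2 (f := Equiv.ofBijective φ hφ) hcont, fun _ => rfl⟩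
end

section
/- Consider the map Log: (𝔻*)² → [0,1], Log(z_0,z_1) = log|z_1| / log|z_0 z_1|. If (U', z') is another adapted coordinate chart with z'_i = u_i z_i for nonvanishing holomorphic units u_0, u_1, then Log' − Log = O(1/log|z_0 z_1|^{-1}) locally uniformly; in particular, along any sequence (z_0^{(k)}, z_1^{(k)}) with z_0^{(k)} z_1^{(k)} → 0, the difference Log'(z^{(k)}) − Log(z^{(k)}) tends to 0. -/
/-!
Writing `a = log|z₁|`, `b = log|z₀ z₁|` and `cᵢ = log|uᵢ|`, the change of chart replaces
`a / b` by `(a + c₁) / (b + c₀ + c₁)`. On a compact set the `cᵢ` are bounded by some `M`, since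
the units are continuous and nonvanishing, while `b → -∞` as `z₀ z₁ → 0`; as `0 ≤ a / b ≤ 1`,
the two quotients differ by at most `6M / |b|`.
-/

open Filter Topology Real

lemma abs_add_div_add_sub_div_le {a b c₀ c₁ M : ℝ} (hc₀ : |c₀| ≤ M) (hc₁ : |c₁| ≤ M)
    (hba : b ≤ a) (ha : a ≤ 0) (hb : b < -(4 * M)) :
    |(c₁ + a) / (b + (c₀ + c₁)) - a / b| ≤ 6 * M / (-b) := by
  obtain ⟨hc₀l, hc₀r⟩ := abs_le.mp hc₀
  obtain ⟨hc₁l, hc₁r⟩ := abs_le.mp hc₁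
  have hb_neg : b < 0 := by linarith
  have hd_le : b + (c₀ + c₁) ≤ b / 2 := by linarith
  have hd_neg : b + (c₀ + c₁) < 0 := by linarith
  have hnum : |c₁ * b - a * (c₀ + c₁)| ≤ 3 * M * (-b) := by
    have hab : |a| ≤ -b := by rw [abs_of_nonpos ha]; linarith
    calc |c₁ * b - a * (c₀ + c₁)| ≤ |c₁ * b| + |a * (c₀ + c₁)| := abs_sub _ _
      _ = |c₁| * (-b) + |a| * |c₀ + c₁| := by rw [abs_mul, abs_mul, abs_of_neg hb_neg]
      _ ≤ M * (-b) + (-b) * (M + M) := by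
          have hc : |c₀ + c₁| ≤ M + M := (abs_add_le _ _).trans (add_le_add hc₀ hc₁)
          have hb' : 0 ≤ -b := by linarith
          gcongr
      _ = 3 * M * (-b) := by ring
  have hden : 0 < (b + (c₀ + c₁)) * b := mul_pos_of_neg_of_neg hd_neg hb_neg
  have hdiff : (c₁ + a) / (b + (c₀ + c₁)) - a / b
      = (c₁ * b - a * (c₀ + c₁)) / ((b + (c₀ + c₁)) * b) := by
    field_simp [hb_neg.ne, hd_neg.ne]
    ring
  rw [hdiff, abs_div, abs_of_pos hden, div_le_div_iff₀ hden (by linarith)]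
  nlinarith [abs_nonneg (c₁ * b - a * (c₀ + c₁))]

lemma log_norm_mul {𝕜 : Type*} [NormedDivisionRing 𝕜] {x y : 𝕜} (hx : x ≠ 0) (hy : y ≠ 0) :
    log ‖x * y‖ = log ‖x‖ + log ‖y‖ := by
  rw [norm_mul, log_mul (norm_ne_zero_iff.2 hx) (norm_ne_zero_iff.2 hy)]

lemma abs_log_norm_mul_units_div_sub_le {𝕜 : Type*} [NormedDivisionRing 𝕜]
    {z₀ z₁ v₀ v₁ : 𝕜} {M : ℝ} (hz₀ : z₀ ≠ 0) (hz₁ : z₁ ≠ 0) (hv₀ : v₀ ≠ 0) (hv₁ : v₁ ≠ 0)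
    (hz₀_le : ‖z₀‖ ≤ 1) (hz₁_le : ‖z₁‖ ≤ 1) (hM₀ : |log ‖v₀‖| ≤ M) (hM₁ : |log ‖v₁‖| ≤ M)
    (hsmall : log ‖z₀ * z₁‖ < -(4 * M)) :
    |log ‖v₁ * z₁‖ / log ‖v₀ * z₀ * (v₁ * z₁)‖ - log ‖z₁‖ / log ‖z₀ * z₁‖|
      ≤ 6 * M / log ‖z₀ * z₁‖⁻¹ := by
  rw [log_norm_mul hz₀ hz₁] at hsmall ⊢
  rw [log_norm_mul hv₁ hz₁, log_norm_mul (mul_ne_zero hv₀ hz₀) (mul_ne_zero hv₁ hz₁),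
    log_norm_mul hv₀ hz₀, log_norm_mul hv₁ hz₁, log_inv, log_norm_mul hz₀ hz₁]
  have h₀ : log ‖z₀‖ ≤ 0 := log_nonpos (norm_nonneg _) hz₀_le
  have h₁ : log ‖z₁‖ ≤ 0 := log_nonpos (norm_nonneg _) hz₁_le
  convert abs_add_div_add_sub_div_le hM₀ hM₁ (by linarith) h₁ hsmall using 3
  ring

lemma IsCompact.exists_forall_abs_log_norm_le {X E : Type*} [TopologicalSpace X]
    [NormedAddCommGroup E] {K : Set X} {u : X → E} (hK : IsCompact K) (hu : ContinuousOn u K)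
    (hne : ∀ z ∈ K, u z ≠ 0) : ∃ M, ∀ z ∈ K, |log ‖u z‖| ≤ M :=
  hK.exists_bound_of_continuousOn <|
    ContinuousOn.log hu.norm fun z hz => norm_ne_zero_iff.2 (hne z hz)

lemma tendsto_const_div_log_inv_norm_nhdsNE_zero {E : Type*} [NormedAddCommGroup E] (C : ℝ) :
    Tendsto (fun x : E => C / log ‖x‖⁻¹) (𝓝[≠] 0) (𝓝 0) :=
  tendsto_const_nhds.div_atTop <|
    tendsto_log_atTop.comp tendsto_norm_nhdsNE_zero.inv_tendsto_nhdsGT_zero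

theorem stmt19_general (U : Set (ℂ × ℂ))
    (hU1 : ∀ z ∈ U, ‖z.1‖ < 1 ∧ ‖z.2‖ < 1)
    (u₀ u₁ : ℂ × ℂ → ℂ)
    (hu₀ : DifferentiableOn ℂ u₀ U) (hu₁ : DifferentiableOn ℂ u₁ U)
    (hne₀ : ∀ z ∈ U, u₀ z ≠ 0) (hne₁ : ∀ z ∈ U, u₁ z ≠ 0) :
    (∀ K : Set (ℂ × ℂ), K ⊆ U → IsCompact K →
      ∃ C > (0 : ℝ), ∃ δ ∈ Set.Ioo (0 : ℝ) 1, ∀ z ∈ K, z.1 * z.2 ≠ 0 →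
        ‖(z.1 * z.2)‖ < δ →
        |Real.log (‖(u₁ z * z.2)‖) /
            Real.log (‖((u₀ z * z.1) * (u₁ z * z.2))‖)
          - Real.log (‖z.2‖) / Real.log (‖(z.1 * z.2)‖)|
          ≤ C / Real.log ((‖(z.1 * z.2)‖)⁻¹)) ∧
    (∀ K : Set (ℂ × ℂ), K ⊆ U → IsCompact K → ∀ zk : ℕ → ℂ × ℂ,
      (∀ k, zk k ∈ K ∧ (zk k).1 * (zk k).2 ≠ 0) →
      Tendsto (fun k => (zk k).1 * (zk k).2) atTop (𝓝 0) →
      Tendsto (fun k =>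
          Real.log (‖(u₁ (zk k) * (zk k).2)‖) /
              Real.log (‖((u₀ (zk k) * (zk k).1) * (u₁ (zk k) * (zk k).2))‖)
            - Real.log (‖((zk k).2)‖) /
              Real.log (‖((zk k).1 * (zk k).2)‖))
        atTop (𝓝 0)) := by
  have local_bound : ∀ K : Set (ℂ × ℂ), K ⊆ U → IsCompact K →
      ∃ C > (0 : ℝ), ∃ δ ∈ Set.Ioo (0 : ℝ) 1, ∀ z ∈ K, z.1 * z.2 ≠ 0 → ‖z.1 * z.2‖ < δ →
        |log ‖u₁ z * z.2‖ / log ‖u₀ z * z.1 * (u₁ z * z.2)‖ - log ‖z.2‖ / log ‖z.1 * z.2‖|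
          ≤ C / log ‖z.1 * z.2‖⁻¹ := by
    intro K hKU hK
    obtain ⟨M₀, hM₀⟩ := hK.exists_forall_abs_log_norm_le (hu₀.continuousOn.mono hKU)
      fun z hz => hne₀ z (hKU hz)
    obtain ⟨M₁, hM₁⟩ := hK.exists_forall_abs_log_norm_le (hu₁.continuousOn.mono hKU)
      fun z hz => hne₁ z (hKU hz)
    set M := max (max M₀ M₁) 1
    refine ⟨6 * M, by positivity, exp (-(4 * M)), ⟨exp_pos _, exp_lt_one_iff.2 (neg_neg_of_pos (by positivity))⟩,
      fun z hzK hz hzδ => ?_⟩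
    have hsmall : log ‖z.1 * z.2‖ < -(4 * M) := by
      simpa using log_lt_log (norm_pos_iff.2 hz) hzδ
    exact abs_log_norm_mul_units_div_sub_le (left_ne_zero_of_mul hz) (right_ne_zero_of_mul hz)
      (hne₀ z (hKU hzK)) (hne₁ z (hKU hzK)) (hU1 z (hKU hzK)).1.le (hU1 z (hKU hzK)).2.le
      ((hM₀ z hzK).trans (by simp [M])) ((hM₁ z hzK).trans (by simp [M])) hsmall
  refine ⟨local_bound, fun K hKU hK zk hzk htend => ?_⟩
  obtain ⟨C, -, δ, hδ, hC⟩ := local_bound K hKU hK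
  have htend' : Tendsto (fun k => (zk k).1 * (zk k).2) atTop (𝓝[≠] 0) :=
    tendsto_nhdsWithin_of_tendsto_nhds_of_eventually_within _ htend
      (Eventually.of_forall fun k => (hzk k).2)
  refine squeeze_zero_norm' ?_ ((tendsto_const_div_log_inv_norm_nhdsNE_zero C).comp htend')
  filter_upwards [(tendsto_norm_zero.comp htend).eventually (gt_mem_nhds hδ.1)] with k hk
  exact hC (zk k) (hzk k).1 (hzk k).2 hk

theorem stmt19 (U : Set (ℂ × ℂ)) (hU : IsOpen U)
    (hU1 : ∀ z ∈ U, ‖z.1‖ < 1 ∧ ‖z.2‖ < 1)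
    (u₀ u₁ : ℂ × ℂ → ℂ)
    (hu₀ : DifferentiableOn ℂ u₀ U) (hu₁ : DifferentiableOn ℂ u₁ U)
    (hne₀ : ∀ z ∈ U, u₀ z ≠ 0) (hne₁ : ∀ z ∈ U, u₁ z ≠ 0) :
    (∀ K : Set (ℂ × ℂ), K ⊆ U → IsCompact K →
      ∃ C > (0 : ℝ), ∃ δ ∈ Set.Ioo (0 : ℝ) 1, ∀ z ∈ K, z.1 * z.2 ≠ 0 →
        ‖(z.1 * z.2)‖ < δ →
        |Real.log (‖(u₁ z * z.2)‖) /
            Real.log (‖((u₀ z * z.1) * (u₁ z * z.2))‖)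
          - Real.log (‖z.2‖) / Real.log (‖(z.1 * z.2)‖)|
          ≤ C / Real.log ((‖(z.1 * z.2)‖)⁻¹)) ∧
    (∀ K : Set (ℂ × ℂ), K ⊆ U → IsCompact K → ∀ zk : ℕ → ℂ × ℂ,
      (∀ k, zk k ∈ K ∧ (zk k).1 * (zk k).2 ≠ 0) →
      Tendsto (fun k => (zk k).1 * (zk k).2) atTop (𝓝 0) →
      Tendsto (fun k =>
          Real.log (‖(u₁ (zk k) * (zk k).2)‖) /
              Real.log (‖((u₀ (zk k) * (zk k).1) * (u₁ (zk k) * (zk k).2))‖)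
            - Real.log (‖((zk k).2)‖) /
              Real.log (‖((zk k).1 * (zk k).2)‖))
        atTop (𝓝 0)) :=
  stmt19_general U hU1 u₀ u₁ hu₀ hu₁ hne₀ hne₁
end
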